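/- arXiv:1002.3311 — 3 statements merged into one kernel-verified Lean document; each statement's English description precedes it below -/
import Mathlib

section
/- Let n ≥ 1 and let x ∈ Mₙ(ℂ) be an upper triangular matrix that is regular, i.e. the space {z ∈ Mₙ(ℂ) | zx = xz} has complex dimension n. Then for every strictly upper triangular matrix m ∈ Mₙ(ℂ) there exists an upper triangular matrix u ∈ Mₙ(ℂ) with xu − ux = m; that is, ad x maps the Borel subalgebra of upper triangular matrices onto its derived algebra of strictly upper triangular matrices. (This is the gl_n case of the surjectivity statement proved in Lemma 5.2(i): for x ∈ 𝔟 ∩ 𝔤ʳ, the map ad_𝔟 x : 𝔟 → [𝔟,𝔟] is surjective.) -/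
open Matrix

noncomputable section

/-- `Mat n` is the algebra `Mₙ(ℂ)` of `n × n` complex matrices. -/
abbrev Mat (n : ℕ) := Matrix (Fin n) (Fin n) ℂ

/-- Evaluation of a polynomial in the `2n²` matrix entries at a pair of matrices:
a "polynomial function on `Mₙ(ℂ) × Mₙ(ℂ)`". -/
def evalPair {n : ℕ} (f : MvPolynomial ((Fin n × Fin n) ⊕ (Fin n × Fin n)) ℂ)
    (x y : Mat n) : ℂ :=
  MvPolynomial.eval (Sum.elim (fun p => x p.1 p.2) (fun p => y p.1 p.2)) f

/-- `v` is a cyclic vector for the pair `(x, y)`: the vectors `a · v`, for `a` in the unital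
subalgebra `ℂ⟨x,y⟩` generated by `x` and `y`, exhaust (equivalently, span) `ℂⁿ`. -/
def IsCyclicVec {n : ℕ} (x y : Mat n) (v : Fin n → ℂ) : Prop :=
  ∀ w : Fin n → ℂ, ∃ a ∈ Algebra.adjoin ℂ ({x, y} : Set (Mat n)), a.mulVec v = w

/-- A matrix is upper triangular: all entries below the main diagonal vanish. -/
def UpperTri {n : ℕ} (x : Mat n) : Prop := ∀ i j : Fin n, j < i → x i j = 0

/-- A matrix is strictly upper triangular: all entries on or below the main diagonal vanish. -/
def StrictUpperTri {n : ℕ} (x : Mat n) : Prop := ∀ i j : Fin n, j ≤ i → x i j = 0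

/-- The diagonal part of a matrix: the diagonal matrix with the same diagonal entries. -/
def diagPart {n : ℕ} (x : Mat n) : Mat n := Matrix.diagonal (fun i => x i i)

/-- A matrix is diagonalizable: conjugate to a diagonal matrix. -/
def IsDiagable {n : ℕ} (s : Mat n) : Prop :=
  ∃ g : Mat n, IsUnit g ∧ Matrix.IsDiag (g * s * g⁻¹)

/-- A matrix is regular semisimple: its characteristic polynomial has `n` distinct
complex roots. -/
def RegSS {n : ℕ} (x : Mat n) : Prop := x.charpoly.roots.toFinset.card = n

/-! Rank–nullity for `ad x = x * · - · * x` restricted to the upper triangular matrices `𝔟`: its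
image lies in the strictly upper triangular matrices `𝔫`, and its kernel lies in the centralizer
of `x`, of dimension `n`. Since the diagonal map `𝔟 → Kⁿ` is onto with kernel `𝔫`,
`dim 𝔟 = dim 𝔫 + n`, so the image has dimension at least `dim 𝔫` and is all of `𝔫`. -/

open Module

theorem Submodule.finrank_map_add_finrank_inf_ker {K V W : Type*} [Field K] [AddCommGroup V]
    [Module K V] [AddCommGroup W] [Module K W] (f : V →ₗ[K] W) (p : Submodule K V)
    [FiniteDimensional K p] :
    finrank K (p.map f) + finrank K ↥(p ⊓ LinearMap.ker f) = finrank K p := by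
  have hrange : p.map f = LinearMap.range (f ∘ₗ p.subtype) := by
    rw [LinearMap.range_comp, p.range_subtype]
  rw [← p.map_comap_subtype, p.finrank_map_subtype_eq, ← LinearMap.ker_comp, hrange]
  exact LinearMap.finrank_range_add_finrank_ker (f ∘ₗ p.subtype)

namespace Matrix

section

variable {R ι : Type*} [Fintype ι] [LinearOrder ι]

theorem IsUpperTriangular.mul_apply_self [NonUnitalNonAssocSemiring R] {A B : Matrix ι ι R}
    (hA : A.IsUpperTriangular) (hB : B.IsUpperTriangular) (i : ι) :
    (A * B) i i = A i i * B i i := by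
  rw [mul_apply, Finset.sum_eq_single i]
  · intro k _ hki
    rcases hki.lt_or_gt with hlt | hgt
    · rw [hA hlt, zero_mul]
    · rw [hB hgt, mul_zero]
  · simp

theorem IsUpperTriangular.diag_commutator_eq_zero [CommRing R] {A B : Matrix ι ι R}
    (hA : A.IsUpperTriangular) (hB : B.IsUpperTriangular) : diag (A * B - B * A) = 0 := by
  ext i
  simp [hA.mul_apply_self hB, hB.mul_apply_self hA, mul_comm]

end

variable (K ι : Type*) [Field K] [Fintype ι] [LinearOrder ι]

def upperTriangular : Submodule K (Matrix ι ι K) :=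
  Subalgebra.toSubmodule (blockTriangularSubalgebra K K id)

def strictUpperTriangular : Submodule K (Matrix ι ι K) :=
  upperTriangular K ι ⊓ LinearMap.ker (diagLinearMap ι K K)

variable {K ι}

theorem mem_upperTriangular {A : Matrix ι ι K} :
    A ∈ upperTriangular K ι ↔ A.IsUpperTriangular :=
  Iff.rfl

theorem mem_strictUpperTriangular {A : Matrix ι ι K} :
    A ∈ strictUpperTriangular K ι ↔ ∀ i j, j ≤ i → A i j = 0 := by
  simp only [strictUpperTriangular, Submodule.mem_inf, mem_upperTriangular, LinearMap.mem_ker,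
    diagLinearMap_apply, funext_iff, Pi.zero_apply]
  constructor
  · rintro ⟨hupper, hdiag⟩ i j hji
    rcases hji.lt_or_eq with hlt | rfl
    exacts [hupper hlt, hdiag j]
  · intro h
    exact ⟨fun i j hji => h i j hji.le, fun i => h i i le_rfl⟩

theorem finrank_upperTriangular :
    finrank K (upperTriangular K ι) = finrank K (strictUpperTriangular K ι) + Fintype.card ι := by
  have hdiag : (upperTriangular K ι).map (diagLinearMap ι K K) = ⊤ :=
    eq_top_iff.2 fun d _ => ⟨diagonal d, blockTriangular_diagonal d, diag_diagonal d⟩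
  rw [strictUpperTriangular,
    ← (upperTriangular K ι).finrank_map_add_finrank_inf_ker (diagLinearMap ι K K), hdiag,
    finrank_top, finrank_fintype_fun_eq_card, add_comm]

theorem map_commutator_upperTriangular {x : Matrix ι ι K} (hx : x.IsUpperTriangular)
    (hreg : finrank K (Subalgebra.centralizer K {x}) ≤ Fintype.card ι) :
    (upperTriangular K ι).map (LinearMap.mulLeft K x - LinearMap.mulRight K x) =
      strictUpperTriangular K ι := by
  set ad := LinearMap.mulLeft K x - LinearMap.mulRight K x
  have himage : (upperTriangular K ι).map ad ≤ strictUpperTriangular K ι := by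
    rintro _ ⟨u, hu, rfl⟩
    exact ⟨(hx.mul hu).sub (hu.mul hx), hx.diag_commutator_eq_zero hu⟩
  have hker : upperTriangular K ι ⊓ LinearMap.ker ad ≤
      Subalgebra.toSubmodule (Subalgebra.centralizer K {x}) := by
    rintro u ⟨-, hu⟩
    rw [Subalgebra.mem_toSubmodule, Subalgebra.mem_centralizer_iff]
    rintro _ rfl
    exact sub_eq_zero.1 hu
  refine Submodule.eq_of_le_of_finrank_le himage ?_
  have hrank := (upperTriangular K ι).finrank_map_add_finrank_inf_ker ad
  have hker_le := (Submodule.finrank_mono hker).trans hreg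
  rw [finrank_upperTriangular] at hrank
  omega

end Matrix

theorem stmt6_general (n : ℕ) (x : Mat n) (hx : UpperTri x)
    (hreg : Module.finrank ℂ (Subalgebra.centralizer ℂ ({x} : Set (Mat n))) = n) :
    ∀ m : Mat n, StrictUpperTri m → ∃ u : Mat n, UpperTri u ∧ x * u - u * x = m := by
  intro m hm
  have hsurj := Matrix.map_commutator_upperTriangular (fun i j hji => hx i j hji)
    (hreg.trans (Fintype.card_fin n).symm).le
  obtain ⟨u, hu, hum⟩ := hsurj.ge (mem_strictUpperTriangular.2 hm)
  exact ⟨u, fun i j hji => hu hji, hum⟩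

/-- **`gl_n` case of the surjectivity statement in Lemma 5.2(i)**: if `x` is an upper
triangular matrix that is regular (its centralizer has dimension `n`), then `ad x` maps
the Borel subalgebra of upper triangular matrices onto the space of strictly upper
triangular matrices. -/
theorem stmt6 (n : ℕ) (hn : 1 ≤ n) (x : Mat n) (hx : UpperTri x)
    (hreg : Module.finrank ℂ (Subalgebra.centralizer ℂ ({x} : Set (Mat n))) = n) :
    ∀ m : Mat n, StrictUpperTri m → ∃ u : Mat n, UpperTri u ∧ x * u - u * x = m :=
  stmt6_general n x hx hreg
end
end

section
/- Let n ≥ 1, let x ∈ Mₙ(ℂ) be upper triangular, and let m, y, h ∈ Mₙ(ℂ) with m strictly upper triangular and h diagonal. Then the following are equivalent: (a) for every α ∈ Mₙ(ℂ) and every upper triangular β ∈ Mₙ(ℂ) one has tr(α m) + tr((αx − xα + β) y) + tr(diag(β) h) = 0, where diag(β) is the diagonal part of β; (b) y is upper triangular, m = yx − xy, and h = −diag(y). (This is the gl_n case of the linear-algebra computation at the heart of Proposition 5.1, identifying the fiber of the conormal bundle to ε(g̃) inside T*(ℬ × 𝔤 × 𝔱).) -/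
open Matrix

noncomputable section

/-
Since `α` and `β` enter independently, the trace identity splits into two. By cyclicity of
the trace, `tr((αx − xα) y) = tr(α (xy − yx))`, so the `α`-part says `tr(α (m + xy − yx)) = 0`
for all `α`, i.e. `m = yx − xy` by non-degeneracy of the trace form. As `h` is diagonal,
`tr(diag(β) h) = tr(β h)`, so the `β`-part says that `y + h` lies in the annihilator of the upper
triangular matrices under the trace form, which is the space of strictly upper triangular
matrices; with `h` diagonal this means `y` is upper triangular and `h = −diag(y)`.
-/

namespace Matrix

variable {ι R : Type*} [Fintype ι] [CommRing R]

theorem forall_trace_mul_eq_zero_iff {A : Matrix ι ι R} :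
    (∀ α : Matrix ι ι R, trace (α * A) = 0) ↔ A = 0 := by
  simp only [ext_iff_trace_mul_left (B := 0), Matrix.mul_zero, trace_zero]

theorem trace_commutator_mul (α x y : Matrix ι ι R) :
    trace ((α * x - x * α) * y) = trace (α * (x * y - y * x)) := by
  rw [sub_mul, mul_sub, trace_sub, trace_sub, Matrix.mul_assoc, Matrix.mul_assoc,
    trace_mul_comm x, Matrix.mul_assoc]

end Matrix

section Triangular

variable {n : ℕ}

theorem upperTri_single {i j : Fin n} (hij : i ≤ j) (c : ℂ) : UpperTri (single i j c) := by
  intro a b hba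
  rw [single_apply_of_ne]
  rintro ⟨rfl, rfl⟩
  exact hij.not_gt hba

theorem forall_upperTri_trace_mul_eq_zero_iff {N : Mat n} :
    (∀ β : Mat n, UpperTri β → trace (β * N) = 0) ↔ StrictUpperTri N := by
  refine ⟨fun H i j hji => ?_, fun hN β hβ => ?_⟩
  · simpa [trace_single_mul] using H (single j i 1) (upperTri_single hji 1)
  · refine Finset.sum_eq_zero fun i _ => ?_
    rw [diag_apply, mul_apply]
    refine Finset.sum_eq_zero fun k _ => ?_
    rcases lt_or_ge k i with hki | hik
    · rw [hβ i k hki, zero_mul]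
    · rw [hN k i hik, mul_zero]

theorem trace_diagPart_mul_of_isDiag (β : Mat n) {h : Mat n} (hh : h.IsDiag) :
    trace (diagPart β * h) = trace (β * h) := by
  rw [← hh.diagonal_diag]
  simp [diagPart, trace, mul_diagonal]

theorem strictUpperTri_add_iff {y h : Mat n} (hh : h.IsDiag) :
    StrictUpperTri (y + h) ↔ UpperTri y ∧ h = -diagPart y := by
  constructor
  · intro H
    refine ⟨fun i j hji => by simpa [hh hji.ne'] using H i j hji.le, ?_⟩
    ext i j
    rcases eq_or_ne i j with rfl | hij
    · simpa [diagPart, eq_neg_iff_add_eq_zero, add_comm] using H i i le_rfl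
    · simp [diagPart, hh hij, hij]
  · rintro ⟨hy, rfl⟩ i j hji
    rcases hji.eq_or_lt with rfl | hji
    · simp [diagPart]
    · simp [diagPart, hy i j hji, hji.ne']

end Triangular

theorem stmt7_general (n : ℕ) (x m y h : Mat n) (hh : Matrix.IsDiag h) :
    (∀ α β : Mat n, UpperTri β →
        Matrix.trace (α * m) + Matrix.trace ((α * x - x * α + β) * y) +
          Matrix.trace (diagPart β * h) = 0) ↔
      (UpperTri y ∧ m = y * x - x * y ∧ h = -diagPart y) := by
  have pairing (α β : Mat n) :
      trace (α * m) + trace ((α * x - x * α + β) * y) + trace (diagPart β * h) =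
        trace (α * (m + x * y - y * x)) + trace (β * (y + h)) := by
    rw [add_mul, trace_add, trace_commutator_mul, trace_diagPart_mul_of_isDiag β hh,
      add_sub_assoc, mul_add, mul_add, trace_add, trace_add]
    ring
  have split : (∀ α β : Mat n, UpperTri β →
      trace (α * (m + x * y - y * x)) + trace (β * (y + h)) = 0) ↔
      (∀ α : Mat n, trace (α * (m + x * y - y * x)) = 0) ∧
        ∀ β : Mat n, UpperTri β → trace (β * (y + h)) = 0 := by
    refine ⟨fun H => ⟨fun α => ?_, fun β hβ => ?_⟩,
      fun H α β hβ => by rw [H.1, H.2 β hβ, add_zero]⟩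
    · simpa using H α 0 fun _ _ _ => rfl
    · simpa using H 0 β hβ
  have commutator : m + x * y - y * x = 0 ↔ m = y * x - x * y := by
    rw [add_sub_assoc, add_eq_zero_iff_eq_neg, neg_sub]
  simp only [pairing, split, forall_trace_mul_eq_zero_iff, commutator,
    forall_upperTri_trace_mul_eq_zero_iff, strictUpperTri_add_iff hh]
  tauto

/-- **`gl_n` case of the linear-algebra computation in Proposition 5.1** (identifying the
fiber of the conormal bundle to `ε(g̃)` inside `T*(ℬ × 𝔤 × 𝔱)`): given `x` upper
triangular, `m` strictly upper triangular and `h` diagonal, the trace identity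
`tr(α m) + tr((αx − xα + β) y) + tr(diag(β) h) = 0` holds for all `α` and all upper
triangular `β` iff `y` is upper triangular, `m = yx − xy` and `h = −diag(y)`. -/
theorem stmt7 (n : ℕ) (hn : 1 ≤ n) (x m y h : Mat n)
    (hx : UpperTri x) (hm : StrictUpperTri m) (hh : Matrix.IsDiag h) :
    (∀ α β : Mat n, UpperTri β →
        Matrix.trace (α * m) + Matrix.trace ((α * x - x * α + β) * y) +
          Matrix.trace (diagPart β * h) = 0) ↔
      (UpperTri y ∧ m = y * x - x * y ∧ h = -diagPart y) :=
  stmt7_general n x m y h hh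
end
end

section
/- Let n ≥ 1 and let x, y ∈ Mₙ(ℂ) be upper triangular matrices with diagonal parts dₓ and d_y (the diagonal matrices with the same diagonal entries as x and y respectively). Then every polynomial function f on Mₙ(ℂ) × Mₙ(ℂ) invariant under simultaneous conjugation satisfies f(x,y) = f(dₓ, d_y). (This is the gl_n case of the first step of the proof of Lemma 6.1: for x = h₁ + n₁, y = h₂ + n₂ with hᵢ ∈ 𝔱 and nᵢ ∈ [𝔟,𝔟], one has f(x,y) = f(h₁,h₂) for all f ∈ ℂ[𝔤×𝔤]^G.) -/
open Matrix

noncomputable section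

/-!
The torus element `diag(t⁻¹ ^ i)` conjugates an upper triangular pair `(x, y)` to the pair whose
`(i, j)` entries are scaled by `t ^ (j - i)`. For `t → 0` this tends to `(diagPart x, diagPart y)`,
so an invariant polynomial, being constant on the orbit and continuous, takes the same value there.
-/

namespace Matrix

variable {R : Type*} {n : ℕ}

/-- `j - i` is truncated, so entries below the diagonal are left unscaled. -/
def upperScale [Monoid R] (t : R) (M : Matrix (Fin n) (Fin n) R) : Matrix (Fin n) (Fin n) R :=
  of fun i j => t ^ ((j : ℕ) - i) * M i j

theorem upperScale_zero [MonoidWithZero R] {M : Matrix (Fin n) (Fin n) R}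
    (hM : M.BlockTriangular id) : upperScale 0 M = diagonal fun i => M i i := by
  ext i j
  rcases lt_trichotomy i j with h | rfl | h
  · simp [upperScale, diagonal_apply_ne _ h.ne, zero_pow (Nat.sub_ne_zero_of_lt h)]
  · simp [upperScale]
  · simp [upperScale, diagonal_apply_ne _ h.ne', hM h]

theorem continuous_upperScale [Semiring R] [TopologicalSpace R] [IsTopologicalSemiring R]
    (M : Matrix (Fin n) (Fin n) R) : Continuous fun t : R => upperScale t M :=
  continuous_pi fun _ => continuous_pi fun _ => (continuous_pow _).mul continuous_const

theorem diagonal_inv_pow_inv {K : Type*} [Field K] {t : K} (ht : t ≠ 0) :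
    (diagonal fun i : Fin n => t⁻¹ ^ (i : ℕ))⁻¹ = diagonal fun i : Fin n => t ^ (i : ℕ) := by
  refine inv_eq_right_inv ?_
  rw [diagonal_mul_diagonal, ← diagonal_one]
  congr 1
  funext i
  rw [← mul_pow, inv_mul_cancel₀ ht, one_pow]

theorem upperScale_eq_diagonal_mul_mul_inv {K : Type*} [Field K] {t : K} (ht : t ≠ 0)
    {M : Matrix (Fin n) (Fin n) K} (hM : M.BlockTriangular id) :
    upperScale t M = diagonal (fun i : Fin n => t⁻¹ ^ (i : ℕ)) * M *
      (diagonal fun i : Fin n => t⁻¹ ^ (i : ℕ))⁻¹ := by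
  ext i j
  rw [diagonal_inv_pow_inv ht, mul_diagonal, diagonal_mul, upperScale, of_apply]
  rcases le_or_gt (i : ℕ) j with h | h
  · rw [← pow_sub_mul_pow t h, inv_pow]
    field_simp
  · simp [hM (show j < i from h)]

end Matrix

theorem Continuous.evalPair {X : Type*} [TopologicalSpace X] {n : ℕ}
    (f : MvPolynomial ((Fin n × Fin n) ⊕ (Fin n × Fin n)) ℂ) {a b : X → Mat n}
    (ha : Continuous a) (hb : Continuous b) : Continuous fun t => evalPair f (a t) (b t) :=
  (MvPolynomial.continuous_eval f).comp <| continuous_pi fun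
    | .inl q => (continuous_apply_apply q.1 q.2).comp ha
    | .inr q => (continuous_apply_apply q.1 q.2).comp hb

theorem stmt10_general (n : ℕ) (x y : Mat n) (hx : UpperTri x) (hy : UpperTri y)
    (f : MvPolynomial ((Fin n × Fin n) ⊕ (Fin n × Fin n)) ℂ)
    (hf : ∀ g a b : Mat n, IsUnit g →
      evalPair f (g * a * g⁻¹) (g * b * g⁻¹) = evalPair f a b) :
    evalPair f x y = evalPair f (diagPart x) (diagPart y) := by
  have hx' : x.BlockTriangular id := fun i j h => hx i j h
  have hy' : y.BlockTriangular id := fun i j h => hy i j h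
  let F : ℂ → ℂ := fun t => evalPair f (upperScale t x) (upperScale t y)
  have hF : Continuous F := (continuous_upperScale x).evalPair f (continuous_upperScale y)
  have hF_orbit : Set.EqOn F (fun _ => evalPair f x y) {0}ᶜ := fun t (ht : t ≠ 0) => by
    simp only [F, upperScale_eq_diagonal_mul_mul_inv ht hx',
      upperScale_eq_diagonal_mul_mul_inv ht hy']
    refine hf _ x y (isUnit_diagonal.mpr (Pi.isUnit_iff.mpr fun i => ?_))
    exact (isUnit_iff_ne_zero.mpr (inv_ne_zero ht)).pow _
  have hF_zero : F 0 = evalPair f x y :=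
    congrFun (hF.ext_on (dense_compl_singleton 0) continuous_const hF_orbit) 0
  rw [← hF_zero]
  exact congrArg₂ (evalPair f) (upperScale_zero hx') (upperScale_zero hy')

/-- **First step of the proof of Lemma 6.1, `gl_n` case**: for upper triangular matrices
`x`, `y` with diagonal parts `dₓ`, `d_y`, every polynomial function invariant under
simultaneous conjugation satisfies `f(x,y) = f(dₓ,d_y)`. -/
theorem stmt10 (n : ℕ) (hn : 1 ≤ n) (x y : Mat n) (hx : UpperTri x) (hy : UpperTri y)
    (f : MvPolynomial ((Fin n × Fin n) ⊕ (Fin n × Fin n)) ℂ)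
    (hf : ∀ g a b : Mat n, IsUnit g →
      evalPair f (g * a * g⁻¹) (g * b * g⁻¹) = evalPair f a b) :
    evalPair f x y = evalPair f (diagPart x) (diagPart y) :=
  stmt10_general n x y hx hy f hf
end
end
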